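/- Let u: R^{p+1} -> R be bounded measurable and suppose E[R * u(X̃) * f(W) * <X, v>] = 0 for every bounded measurable f: R^d -> R. Then E[u(X̃) <X, v> | sigma(W)] = 0 almost surely under the conditional probability measure P(. | R = 1). Consequently, if u_1 and u_2 are two bounded solutions of the weighting equation, their difference h = u_1 - u_2 satisfies E[h(X̃) <X, v> | sigma(W)] = 0 under P(. | R = 1), so that (on the event where m_1(W) := E[<X, v> | sigma(W)] under P(. | R = 1) is nonzero) h = Th; this yields the characterization of the full solution set of the weighting equation as pi_*^{-1} + {Th : h in L2(X̃)}. (Uniqueness/characterization part of Theorem 2.) -/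

import Mathlib

open MeasureTheory ProbabilityTheory Matrix

/-- `X̃ = (Z, X) ∈ ℝ^{p+1}`, the surrogate stacked on top of the covariates. -/
noncomputable def tilde {Ω : Type*} {p : ℕ} (Z : Ω → ℝ) (X : Ω → Fin p → ℝ) (ω : Ω) :
    Fin (p + 1) → ℝ := Fin.cons (Z ω) (X ω)

/-- `Γᵀ x` for a `(p+1) × d` matrix `Γ` and `x ∈ ℝ^{p+1}`. -/
noncomputable def matT {n d : ℕ} (Γ : Matrix (Fin n) (Fin d) ℝ) (x : Fin n → ℝ) : Fin d → ℝ :=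
  fun j => ∑ i, Γ i j * x i

/-- A measurable `u : ℝ^{p+1} → ℝ` solves the weighting equation if
`E[(R u(X̃) - 1) f(W) ⟨X, v⟩] = 0` for every bounded measurable `f : ℝ^d → ℝ`. -/
def SolvesWeighting {Ω : Type*} [MeasurableSpace Ω] (P : Measure Ω) {p d : ℕ}
    (X : Ω → Fin p → ℝ) (Z R : Ω → ℝ) (Γ : Matrix (Fin (p + 1)) (Fin d) ℝ) (v : Fin p → ℝ)
    (u : (Fin (p + 1) → ℝ) → ℝ) : Prop :=
  ∀ f : (Fin d → ℝ) → ℝ, Measurable f → (∃ C, ∀ w, |f w| ≤ C) →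
    ∫ ω, (R ω * u (tilde Z X ω) - 1) * f (matT Γ (tilde Z X ω)) * (X ω ⬝ᵥ v) ∂P = 0

/-!
Testing the hypothesis against indicators `f = 1_t` says that `g = u(X̃) ⟨X, v⟩` integrates to
zero over every set `W⁻¹(t) ∩ {R = 1}`. Up to the factor `P(R = 1)⁻¹` these are the integrals of
`g` over the `σ(W)`-measurable sets under `P(· ∣ R = 1)`, so the conditional expectation vanishes
by its uniqueness (and by convention when `g` is not integrable). For two bounded solutions of
the weighting equation the `-1` terms cancel, so their difference satisfies the hypothesis; the
last claim is then immediate, since `m_h(W) = 0` almost surely.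
-/

section CondExp

variable {Ω E : Type*} [NormedAddCommGroup E] [NormedSpace ℝ E] [CompleteSpace E]
  {m m₀ : MeasurableSpace Ω} {μ : Measure Ω}

theorem condExp_ae_eq_zero_of_forall_setIntegral_eq_zero (hm : m ≤ m₀) [SigmaFinite (μ.trim hm)]
    {g : Ω → E} (hg : ∀ s, MeasurableSet[m] s → ∫ x in s, g x ∂μ = 0) : μ[g|m] =ᵐ[μ] 0 := by
  by_cases hint : Integrable g μ
  · refine (ae_eq_condExp_of_forall_setIntegral_eq hm hint (fun _ _ _ => integrableOn_zero)
      (fun s hs _ => ?_) aestronglyMeasurable_zero).symm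
    rw [hg s hs, integral_zero]
  · rw [condExp_of_not_integrable hint]

end CondExp

section Cond

variable {Ω β : Type*} [MeasurableSpace Ω] [MeasurableSpace β] {μ : Measure Ω}

theorem setIntegral_cond {A s : Set Ω} (hs : MeasurableSet s) (g : Ω → ℝ) :
    ∫ x in s, g x ∂μ[|A] = (μ A)⁻¹.toReal * ∫ x in s ∩ A, g x ∂μ := by
  rw [ProbabilityTheory.cond, Measure.restrict_smul, integral_smul_measure,
    Measure.restrict_restrict hs, smul_eq_mul]

theorem condExp_cond_comap_ae_eq_zero {A : Set Ω} {W : Ω → β} (hW : Measurable W) {g : Ω → ℝ}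
    (hg : ∀ t, MeasurableSet t → ∫ x in W ⁻¹' t ∩ A, g x ∂μ = 0) :
    μ[|A][g|MeasurableSpace.comap W inferInstance] =ᵐ[μ[|A]] 0 :=
  condExp_ae_eq_zero_of_forall_setIntegral_eq_zero hW.comap_le <| by
    rintro _ ⟨t, ht, rfl⟩
    rw [setIntegral_cond (hW ht), hg t ht, mul_zero]

theorem condExp_cond_eq_one_ae_eq_zero {R : Ω → ℝ} (hR : Measurable R)
    (hR01 : ∀ ω, R ω = 0 ∨ R ω = 1) {W : Ω → β} (hW : Measurable W) (a b : Ω → ℝ)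
    (h : ∀ f : β → ℝ, Measurable f → (∃ C, ∀ w, |f w| ≤ C) →
      ∫ ω, R ω * a ω * f (W ω) * b ω ∂μ = 0) :
    μ[|{ω | R ω = 1}][fun ω => a ω * b ω|MeasurableSpace.comap W inferInstance]
      =ᵐ[μ[|{ω | R ω = 1}]] 0 := by
  refine condExp_cond_comap_ae_eq_zero hW fun t ht => ?_
  have hindicator : ∀ ω, (W ⁻¹' t ∩ {ω | R ω = 1}).indicator (fun ω => a ω * b ω) ω
      = R ω * a ω * t.indicator 1 (W ω) * b ω := by
    intro ω
    by_cases hω : W ω ∈ t <;> rcases hR01 ω with hRω | hRω <;> simp [hω, hRω]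
  have hA : MeasurableSet {ω | R ω = 1} := hR (measurableSet_singleton 1)
  rw [← integral_indicator ((hW ht).inter hA)]
  simp_rw [hindicator]
  exact h _ (measurable_one.indicator ht)
    ⟨1, fun w => by simpa using norm_indicator_le_norm_self (1 : β → ℝ) w⟩

end Cond

section Bounded

variable {Ω : Type*} [MeasurableSpace Ω] {P : Measure Ω} {p : ℕ}

theorem memLp_top_comp_of_bounded {α : Type*} [MeasurableSpace α] {Y : Ω → α} (hY : Measurable Y)
    {g : α → ℝ} (hg : Measurable g) (hgbd : ∃ C, ∀ x, |g x| ≤ C) :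
    MemLp (fun ω => g (Y ω)) ⊤ P :=
  let ⟨C, hC⟩ := hgbd
  memLp_top_of_bound (hg.comp hY).aestronglyMeasurable C (ae_of_all _ fun ω => hC (Y ω))

theorem memLp_top_dotProduct {X : Ω → Fin p → ℝ} (hX : Measurable X)
    (hXbd : ∃ C, ∀ ω i, |X ω i| ≤ C) (v : Fin p → ℝ) :
    MemLp (fun ω => X ω ⬝ᵥ v) ⊤ P :=
  let ⟨C, hC⟩ := hXbd
  memLp_finsetSum Finset.univ fun i _ =>
    (memLp_top_of_bound (f := fun ω => X ω i)
      ((measurable_pi_apply i).comp hX).aestronglyMeasurable C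
      (ae_of_all _ fun ω => hC ω i)).mul_const (v i)

end Bounded

section Weighting

variable {Ω : Type*} [MeasurableSpace Ω] {P : Measure Ω} {p d : ℕ} {X : Ω → Fin p → ℝ}
  {Z R : Ω → ℝ} {Γ : Matrix (Fin (p + 1)) (Fin d) ℝ} {v : Fin p → ℝ}

theorem measurable_tilde (hZ : Measurable Z) (hX : Measurable X) : Measurable (tilde Z X) := by
  refine measurable_pi_iff.mpr fun i => Fin.cases ?_ (fun j => ?_) i
  · simpa [tilde] using hZ
  · simpa [tilde, Function.comp_def] using (measurable_pi_apply j).comp hX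

theorem measurable_matT {n : ℕ} (Γ : Matrix (Fin n) (Fin d) ℝ) : Measurable (matT Γ) :=
  measurable_pi_lambda _ fun _ => Finset.measurable_sum _ fun i _ =>
    measurable_const.mul (measurable_pi_apply i)

theorem integrable_weighting_integrand [IsFiniteMeasure P] (hX : Measurable X)
    (hZ : Measurable Z) (hR : Measurable R) (hXbd : ∃ C, ∀ ω i, |X ω i| ≤ C)
    (hR01 : ∀ ω, R ω = 0 ∨ R ω = 1) {u : (Fin (p + 1) → ℝ) → ℝ} (hu : Measurable u)
    (hubd : ∃ C, ∀ x, |u x| ≤ C) {f : (Fin d → ℝ) → ℝ} (hf : Measurable f)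
    (hfbd : ∃ C, ∀ w, |f w| ≤ C) :
    Integrable (fun ω => (R ω * u (tilde Z X ω) - 1) * f (matT Γ (tilde Z X ω)) * (X ω ⬝ᵥ v))
      P := by
  have hRL : MemLp R ⊤ P := memLp_top_of_bound hR.aestronglyMeasurable 1
    (ae_of_all _ fun ω => by rcases hR01 ω with h | h <;> simp [h])
  have huL : MemLp (fun ω => u (tilde Z X ω)) ⊤ P :=
    memLp_top_comp_of_bounded (measurable_tilde hZ hX) hu hubd
  have hfL : MemLp (fun ω => f (matT Γ (tilde Z X ω))) ⊤ P :=
    memLp_top_comp_of_bounded ((measurable_matT Γ).comp (measurable_tilde hZ hX)) hf hfbd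
  have hintegrandL := (memLp_top_dotProduct hX hXbd v).mul' (r := ⊤) <| hfL.mul' (r := ⊤) <|
    (huL.mul' (r := ⊤) hRL).sub (memLp_const 1)
  exact hintegrandL.integrable le_top

theorem SolvesWeighting.integral_sub_eq_zero [IsFiniteMeasure P] (hX : Measurable X)
    (hZ : Measurable Z) (hR : Measurable R) (hXbd : ∃ C, ∀ ω i, |X ω i| ≤ C)
    (hR01 : ∀ ω, R ω = 0 ∨ R ω = 1) {u₁ u₂ : (Fin (p + 1) → ℝ) → ℝ}
    (hu₁ : Measurable u₁) (hu₂ : Measurable u₂)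
    (hu₁bd : ∃ C, ∀ x, |u₁ x| ≤ C) (hu₂bd : ∃ C, ∀ x, |u₂ x| ≤ C)
    (hs₁ : SolvesWeighting P X Z R Γ v u₁) (hs₂ : SolvesWeighting P X Z R Γ v u₂)
    {f : (Fin d → ℝ) → ℝ} (hf : Measurable f) (hfbd : ∃ C, ∀ w, |f w| ≤ C) :
    ∫ ω, R ω * (u₁ (tilde Z X ω) - u₂ (tilde Z X ω)) * f (matT Γ (tilde Z X ω)) * (X ω ⬝ᵥ v)
      ∂P = 0 := by
  calc _ = ∫ ω, (R ω * u₁ (tilde Z X ω) - 1) * f (matT Γ (tilde Z X ω)) * (X ω ⬝ᵥ v) ∂P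
          - ∫ ω, (R ω * u₂ (tilde Z X ω) - 1) * f (matT Γ (tilde Z X ω)) * (X ω ⬝ᵥ v) ∂P := by
        rw [← integral_sub
          (integrable_weighting_integrand hX hZ hR hXbd hR01 hu₁ hu₁bd hf hfbd)
          (integrable_weighting_integrand hX hZ hR hXbd hR01 hu₂ hu₂bd hf hfbd)]
        congr 1 with ω
        ring
    _ = 0 := by rw [hs₁ f hf hfbd, hs₂ f hf hfbd, sub_zero]

end Weighting

theorem weighting_equation_solution_characterization_general
    {Ω : Type*} [MeasurableSpace Ω] {P : Measure Ω}
    [IsProbabilityMeasure P] {p d : ℕ}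
    (X : Ω → Fin p → ℝ) (Z R : Ω → ℝ)
    (hX : Measurable X) (hZ : Measurable Z) (hR : Measurable R)
    (hXbd : ∃ C, ∀ ω i, |X ω i| ≤ C)
    (hR01 : ∀ ω, R ω = 0 ∨ R ω = 1)
    (Γ : Matrix (Fin (p + 1)) (Fin d) ℝ) (v : Fin p → ℝ) :
    (∀ u : (Fin (p + 1) → ℝ) → ℝ, Measurable u → (∃ C, ∀ x, |u x| ≤ C) →
        (∀ f : (Fin d → ℝ) → ℝ, Measurable f → (∃ C, ∀ w, |f w| ≤ C) →
          ∫ ω, R ω * u (tilde Z X ω) * f (matT Γ (tilde Z X ω)) * (X ω ⬝ᵥ v) ∂P = 0) →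
        (P[|{ω | R ω = 1}])[fun ω => u (tilde Z X ω) * (X ω ⬝ᵥ v) |
            MeasurableSpace.comap (fun ω => matT Γ (tilde Z X ω)) inferInstance]
          =ᵐ[P[|{ω | R ω = 1}]] 0) ∧
      ∀ u₁ u₂ : (Fin (p + 1) → ℝ) → ℝ, Measurable u₁ → Measurable u₂ →
        (∃ C, ∀ x, |u₁ x| ≤ C) → (∃ C, ∀ x, |u₂ x| ≤ C) →
        SolvesWeighting P X Z R Γ v u₁ → SolvesWeighting P X Z R Γ v u₂ →
        ((P[|{ω | R ω = 1}])[fun ω => (u₁ (tilde Z X ω) - u₂ (tilde Z X ω)) * (X ω ⬝ᵥ v) |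
            MeasurableSpace.comap (fun ω => matT Γ (tilde Z X ω)) inferInstance]
          =ᵐ[P[|{ω | R ω = 1}]] 0) ∧
        -- so that `h = 𝒯h` on the event where `m₁(W) ≠ 0`, for any versions `m_h`, `m₁`
        ∀ mh m1 : (Fin d → ℝ) → ℝ, Measurable mh → Measurable m1 →
          ((fun ω => mh (matT Γ (tilde Z X ω))) =ᵐ[P[|{ω | R ω = 1}]]
            (P[|{ω | R ω = 1}])[fun ω =>
                (u₁ (tilde Z X ω) - u₂ (tilde Z X ω)) * (X ω ⬝ᵥ v) |
              MeasurableSpace.comap (fun ω => matT Γ (tilde Z X ω)) inferInstance]) →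
          ((fun ω => m1 (matT Γ (tilde Z X ω))) =ᵐ[P[|{ω | R ω = 1}]]
            (P[|{ω | R ω = 1}])[fun ω => X ω ⬝ᵥ v |
              MeasurableSpace.comap (fun ω => matT Γ (tilde Z X ω)) inferInstance]) →
          ∀ᵐ ω ∂(P[|{ω | R ω = 1}]), m1 (matT Γ (tilde Z X ω)) ≠ 0 →
            u₁ (tilde Z X ω) - u₂ (tilde Z X ω)
              = (u₁ (tilde Z X ω) - u₂ (tilde Z X ω))
                - mh (matT Γ (tilde Z X ω)) / m1 (matT Γ (tilde Z X ω)) := by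
  have hW : Measurable fun ω => matT Γ (tilde Z X ω) :=
    (measurable_matT Γ).comp (measurable_tilde hZ hX)
  have hcondExp := fun a : Ω → ℝ =>
    condExp_cond_eq_one_ae_eq_zero (μ := P) hR hR01 hW a (fun ω => X ω ⬝ᵥ v)
  refine ⟨fun u _ _ hyp => hcondExp _ hyp, fun u₁ u₂ hu₁ hu₂ hu₁bd hu₂bd hs₁ hs₂ => ?_⟩
  have hdiff := hcondExp _ fun f hf hfbd =>
    hs₁.integral_sub_eq_zero hX hZ hR hXbd hR01 hu₁ hu₂ hu₁bd hu₂bd hs₂ hf hfbd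
  refine ⟨hdiff, fun mh m1 _ _ hmh _ => ?_⟩
  filter_upwards [hmh.trans hdiff] with ω hmhω _
  rw [hmhω, Pi.zero_apply, zero_div, sub_zero]

/-- **uniqueness/characterization part of Theorem 2.** If `u` is bounded
measurable with `E[R u(X̃) f(W) ⟨X, v⟩] = 0` for every bounded measurable `f`, then
`E[u(X̃) ⟨X, v⟩ ∣ σ(W)] = 0` a.s. under `P(· ∣ R = 1)`.  Consequently, if `u₁, u₂` are two
bounded solutions of the weighting equation, their difference `h = u₁ - u₂` satisfies
`E[h(X̃) ⟨X, v⟩ ∣ σ(W)] = 0` under `P(· ∣ R = 1)`, so that on the event `{m₁(W) ≠ 0}` one has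
`h = 𝒯h`; this yields the characterization of the solution set as `π_*⁻¹ + {𝒯h : h ∈ L²(X̃)}`. -/
theorem weighting_equation_solution_characterization
    {Ω : Type*} [MeasurableSpace Ω] {P : Measure Ω}
    [IsProbabilityMeasure P] {p d : ℕ}
    (X : Ω → Fin p → ℝ) (Z R : Ω → ℝ)
    (hX : Measurable X) (hZ : Measurable Z) (hR : Measurable R)
    (hXbd : ∃ C, ∀ ω i, |X ω i| ≤ C) (hZbd : ∃ C, ∀ ω, |Z ω| ≤ C)
    (hR01 : ∀ ω, R ω = 0 ∨ R ω = 1)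
    (hρpos : 0 < P {ω | R ω = 1})
    (Γ : Matrix (Fin (p + 1)) (Fin d) ℝ) (v : Fin p → ℝ) :
    (∀ u : (Fin (p + 1) → ℝ) → ℝ, Measurable u → (∃ C, ∀ x, |u x| ≤ C) →
        (∀ f : (Fin d → ℝ) → ℝ, Measurable f → (∃ C, ∀ w, |f w| ≤ C) →
          ∫ ω, R ω * u (tilde Z X ω) * f (matT Γ (tilde Z X ω)) * (X ω ⬝ᵥ v) ∂P = 0) →
        (P[|{ω | R ω = 1}])[fun ω => u (tilde Z X ω) * (X ω ⬝ᵥ v) |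
            MeasurableSpace.comap (fun ω => matT Γ (tilde Z X ω)) inferInstance]
          =ᵐ[P[|{ω | R ω = 1}]] 0) ∧
      ∀ u₁ u₂ : (Fin (p + 1) → ℝ) → ℝ, Measurable u₁ → Measurable u₂ →
        (∃ C, ∀ x, |u₁ x| ≤ C) → (∃ C, ∀ x, |u₂ x| ≤ C) →
        SolvesWeighting P X Z R Γ v u₁ → SolvesWeighting P X Z R Γ v u₂ →
        ((P[|{ω | R ω = 1}])[fun ω => (u₁ (tilde Z X ω) - u₂ (tilde Z X ω)) * (X ω ⬝ᵥ v) |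
            MeasurableSpace.comap (fun ω => matT Γ (tilde Z X ω)) inferInstance]
          =ᵐ[P[|{ω | R ω = 1}]] 0) ∧
        -- so that `h = 𝒯h` on the event where `m₁(W) ≠ 0`, for any versions `m_h`, `m₁`
        ∀ mh m1 : (Fin d → ℝ) → ℝ, Measurable mh → Measurable m1 →
          ((fun ω => mh (matT Γ (tilde Z X ω))) =ᵐ[P[|{ω | R ω = 1}]]
            (P[|{ω | R ω = 1}])[fun ω =>
                (u₁ (tilde Z X ω) - u₂ (tilde Z X ω)) * (X ω ⬝ᵥ v) |
              MeasurableSpace.comap (fun ω => matT Γ (tilde Z X ω)) inferInstance]) →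
          ((fun ω => m1 (matT Γ (tilde Z X ω))) =ᵐ[P[|{ω | R ω = 1}]]
            (P[|{ω | R ω = 1}])[fun ω => X ω ⬝ᵥ v |
              MeasurableSpace.comap (fun ω => matT Γ (tilde Z X ω)) inferInstance]) →
          ∀ᵐ ω ∂(P[|{ω | R ω = 1}]), m1 (matT Γ (tilde Z X ω)) ≠ 0 →
            u₁ (tilde Z X ω) - u₂ (tilde Z X ω)
              = (u₁ (tilde Z X ω) - u₂ (tilde Z X ω))
                - mh (matT Γ (tilde Z X ω)) / m1 (matT Γ (tilde Z X ω)) :=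
  weighting_equation_solution_characterization_general X Z R hX hZ hR hXbd hR01 Γ v
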